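/- arXiv:math/0201242 — 2 statements merged into one kernel-verified Lean document; each statement's English description precedes it below -/
import Mathlib

section
/- Let $U \subseteq \mathbb{R}^N$ be open and connected, let $\varepsilon_\alpha \in \mathbb{R}$, let $\varphi^{\alpha,i}, P^{ij} : U \to \mathbb{R}$ be $C^1$ functions, and define $b^{ij}_k = \partial P^{ij}/\partial u^k + \sum_{\alpha=1}^L \varepsilon_\alpha \varphi^{\alpha,i} \, \partial \varphi^{\alpha,j}/\partial u^k$. Suppose $g^{ij} : U \to \mathbb{R}$ are $C^1$ functions with $g^{ij} = g^{ji}$ and $\partial g^{ij}/\partial u^k = b^{ij}_k + b^{ji}_k$ for all indices. Then there exist constants $c^{ij} \in \mathbb{R}$ such that $g^{ij} = P^{ij} + P^{ji} + \sum_{\alpha=1}^L \varepsilon_\alpha \varphi^{\alpha,i} \varphi^{\alpha,j} + c^{ij} + c^{ji}$ on all of $U$. -/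
/-! By the product rule, `g i j` and the Liouville metric
`P i j + P j i + ∑ α, ε α * φ α i * φ α j` have the same partial derivatives `b i j k + b j i k`,
so on the connected open set `U` they differ by a constant `a i j`. Evaluating at one point shows
that `a` is symmetric, hence `a = c + cᵀ` with `c = a / 2`. -/

/-- Partial derivative of `f` in the `k`-th coordinate direction at `x`. -/
noncomputable def pd {N : ℕ} (f : (Fin N → ℝ) → ℝ) (k : Fin N) (x : Fin N → ℝ) : ℝ :=
  fderiv ℝ f x (Pi.single k 1)

section PartialDerivative

variable {N : ℕ} {f g : (Fin N → ℝ) → ℝ} {k : Fin N} {x : Fin N → ℝ}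

lemma fderiv_eq_of_forall_pd_eq (h : ∀ k, pd f k x = pd g k x) :
    fderiv ℝ f x = fderiv ℝ g x :=
  ContinuousLinearMap.coe_injective <| LinearMap.pi_ext fun k t => by
    have hsingle : Pi.single k t = t • (Pi.single k 1 : Fin N → ℝ) := by simp [← Pi.single_smul]
    rw [ContinuousLinearMap.coe_coe, ContinuousLinearMap.coe_coe, hsingle, map_smul, map_smul]
    exact congrArg (t • ·) (h k)

lemma pd_add (hf : DifferentiableAt ℝ f x) (hg : DifferentiableAt ℝ g x) :
    pd (fun y => f y + g y) k x = pd f k x + pd g k x := by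
  simp [pd, fderiv_fun_add hf hg]

lemma pd_mul (hf : DifferentiableAt ℝ f x) (hg : DifferentiableAt ℝ g x) :
    pd (fun y => f y * g y) k x = f x * pd g k x + g x * pd f k x := by
  simp [pd, fderiv_fun_mul hf hg]

lemma pd_const_mul (hf : DifferentiableAt ℝ f x) (c : ℝ) :
    pd (fun y => c * f y) k x = c * pd f k x := by
  simp [pd, fderiv_const_mul hf c]

lemma pd_sum {ι : Type*} {s : Finset ι} {u : ι → (Fin N → ℝ) → ℝ}
    (hu : ∀ i ∈ s, DifferentiableAt ℝ (u i) x) :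
    pd (fun y => ∑ i ∈ s, u i y) k x = ∑ i ∈ s, pd (u i) k x := by
  simp [pd, fderiv_fun_sum hu]

lemma pd_sum_const_mul_mul {ι : Type*} {s : Finset ι} (w : ι → ℝ) {u v : ι → (Fin N → ℝ) → ℝ}
    (hu : ∀ i ∈ s, DifferentiableAt ℝ (u i) x) (hv : ∀ i ∈ s, DifferentiableAt ℝ (v i) x) :
    pd (fun y => ∑ i ∈ s, w i * u i y * v i y) k x =
      ∑ i ∈ s, w i * u i x * pd (v i) k x + ∑ i ∈ s, w i * v i x * pd (u i) k x := by
  rw [pd_sum (u := fun i y => w i * u i y * v i y)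
      fun i hi => ((hu i hi).const_mul (w i)).mul (hv i hi), ← Finset.sum_add_distrib]
  refine Finset.sum_congr rfl fun i hi => ?_
  rw [pd_mul ((hu i hi).const_mul (w i)) (hv i hi), pd_const_mul (hu i hi)]
  ring

lemma IsOpen.exists_eq_add_of_forall_pd_eq {U : Set (Fin N → ℝ)} (hU : IsOpen U)
    (hU' : IsPreconnected U) (hf : DifferentiableOn ℝ f U) (hg : DifferentiableOn ℝ g U)
    (h : ∀ k, ∀ x ∈ U, pd f k x = pd g k x) : ∃ a, ∀ x ∈ U, f x = g x + a :=
  hU.exists_eq_add_of_fderiv_eq hU' hf hg fun x hx => fderiv_eq_of_forall_pd_eq fun k => h k x hx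

end PartialDerivative

lemma Matrix.IsSymm.exists_eq_add_transpose {n R : Type*} [Semiring R] [Invertible (2 : R)]
    {A : Matrix n n R} (hA : A.IsSymm) : ∃ c : Matrix n n R, A = c + c.transpose :=
  ⟨⅟(2 : R) • A, by
    rw [Matrix.transpose_smul, hA.eq, ← add_smul, invOf_two_add_invOf_two, one_smul]⟩

section LiouvilleMetric

variable {ι n : Type*} [Fintype ι] (ε : ι → ℝ)

def liouvilleMetric {X : Type*} (φ : ι → n → X → ℝ) (P : n → n → X → ℝ) (i j : n) (x : X) : ℝ :=
  P i j x + P j i x + ∑ α, ε α * φ α i x * φ α j x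

lemma liouvilleMetric_comm {X : Type*} (φ : ι → n → X → ℝ) (P : n → n → X → ℝ) (i j : n) (x : X) :
    liouvilleMetric ε φ P i j x = liouvilleMetric ε φ P j i x := by
  simp only [liouvilleMetric, add_comm (P i j x), mul_right_comm (ε _) (φ _ i x)]

lemma contDiffOn_liouvilleMetric {N : ℕ} {U : Set (Fin N → ℝ)}
    {φ : ι → n → (Fin N → ℝ) → ℝ} {P : n → n → (Fin N → ℝ) → ℝ}
    (hφ : ∀ α i, ContDiffOn ℝ 1 (φ α i) U) (hP : ∀ i j, ContDiffOn ℝ 1 (P i j) U) (i j : n) :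
    ContDiffOn ℝ 1 (liouvilleMetric ε φ P i j) U := by
  unfold liouvilleMetric
  fun_prop

lemma pd_liouvilleMetric {N : ℕ} {x : Fin N → ℝ}
    {φ : ι → n → (Fin N → ℝ) → ℝ} {P : n → n → (Fin N → ℝ) → ℝ}
    (hφ : ∀ α i, DifferentiableAt ℝ (φ α i) x) (hP : ∀ i j, DifferentiableAt ℝ (P i j) x)
    (i j : n) (k : Fin N) :
    pd (liouvilleMetric ε φ P i j) k x =
      (pd (P i j) k x + ∑ α, ε α * φ α i x * pd (φ α j) k x) +
        (pd (P j i) k x + ∑ α, ε α * φ α j x * pd (φ α i) k x) := by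
  have hsum : DifferentiableAt ℝ (fun y => ∑ α, ε α * φ α i y * φ α j y) x :=
    DifferentiableAt.fun_sum fun α _ => ((hφ α i).const_mul (ε α)).mul (hφ α j)
  unfold liouvilleMetric
  rw [pd_add ((hP i j).fun_add (hP j i)) hsum, pd_add (hP i j) (hP j i),
    pd_sum_const_mul_mul ε (fun α _ => hφ α i) (fun α _ => hφ α j)]
  ring

end LiouvilleMetric

theorem stmt4 (N L : ℕ) (U : Set (Fin N → ℝ)) (hU : IsOpen U) (hconn : IsConnected U)
    (ε : Fin L → ℝ)
    (φ : Fin L → Fin N → (Fin N → ℝ) → ℝ) (P : Fin N → Fin N → (Fin N → ℝ) → ℝ)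
    (hφ : ∀ α i, ContDiffOn ℝ 1 (φ α i) U) (hP : ∀ i j, ContDiffOn ℝ 1 (P i j) U)
    (b : Fin N → Fin N → Fin N → (Fin N → ℝ) → ℝ)
    (hbdef : ∀ i j k, ∀ x ∈ U,
      b i j k x = pd (P i j) k x + ∑ α, ε α * φ α i x * pd (φ α j) k x)
    (g : Fin N → Fin N → (Fin N → ℝ) → ℝ) (hg : ∀ i j, ContDiffOn ℝ 1 (g i j) U)
    (hgsym : ∀ i j, ∀ x ∈ U, g i j x = g j i x)
    (hgd : ∀ i j k, ∀ x ∈ U, pd (g i j) k x = b i j k x + b j i k x) :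
    ∃ c : Matrix (Fin N) (Fin N) ℝ, ∀ i j, ∀ x ∈ U,
      g i j x = P i j x + P j i x + (∑ α, ε α * φ α i x * φ α j x) + c i j + c j i := by
  have hdiff : ∀ {h : (Fin N → ℝ) → ℝ}, ContDiffOn ℝ 1 h U → ∀ x ∈ U, DifferentiableAt ℝ h x :=
    fun h x hx => (h.differentiableOn one_ne_zero).differentiableAt (hU.mem_nhds hx)
  have hshift : ∀ i j, ∃ a, ∀ x ∈ U, g i j x = liouvilleMetric ε φ P i j x + a := fun i j =>
    hU.exists_eq_add_of_forall_pd_eq hconn.isPreconnected ((hg i j).differentiableOn one_ne_zero)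
      ((contDiffOn_liouvilleMetric ε hφ hP i j).differentiableOn one_ne_zero) fun k x hx => by
        rw [hgd i j k x hx, hbdef i j k x hx, hbdef j i k x hx,
          pd_liouvilleMetric ε (fun α i => hdiff (hφ α i) x hx) (fun i j => hdiff (hP i j) x hx)]
  choose a ha using hshift
  obtain ⟨x₀, hx₀⟩ := hconn.nonempty
  have ha_symm : (Matrix.of a).IsSymm := Matrix.IsSymm.ext fun i j => by
    simp only [Matrix.of_apply]
    linarith [ha i j x₀ hx₀, ha j i x₀ hx₀, hgsym i j x₀ hx₀, liouvilleMetric_comm ε φ P i j x₀]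
  obtain ⟨c, hc⟩ := ha_symm.exists_eq_add_transpose
  refine ⟨c, fun i j x hx => ?_⟩
  have hcij : a i j = c i j + c j i := congrFun (congrFun hc i) j
  rw [ha i j x hx, hcij, liouvilleMetric]
  ring
end

section
/- Let $U \subseteq \mathbb{R}^N$ be open, $(\eta^{ij})$ a symmetric invertible real matrix with inverse $(\eta_{ij})$, $\varepsilon_\alpha \in \mathbb{R}$, $F^i, \psi^\alpha : U \to \mathbb{R}$ be $C^2$ functions, and let $u : \mathbb{R} \to U$ be a $C^1$ curve. Then for every $i$ and every $x \in \mathbb{R}$: $\left( \eta^{is} \frac{\partial F^j}{\partial u^s} \eta_{jk} + \frac{\partial F^i}{\partial u^k} + \eta^{is} \frac{\partial^2 F^j}{\partial u^s \partial u^k} \eta_{jr} u^r - \eta^{is} \sum_\alpha \varepsilon_\alpha \frac{\partial \psi^\alpha}{\partial u^s} \frac{\partial \psi^\alpha}{\partial u^k} - \eta^{is} \sum_\alpha \varepsilon_\alpha \frac{\partial^2 \psi^\alpha}{\partial u^s \partial u^k} \psi^\alpha \right)\!\Big|_{u(x)} \frac{du^k}{dx} = \frac{d}{dx}\left( F^i(u(x))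 + \eta^{is} \eta_{jr} \frac{\partial F^j}{\partial u^s}(u(x))\, u^r(x) - \eta^{is} \sum_\alpha \varepsilon_\alpha \frac{\partial \psi^\alpha}{\partial u^s}(u(x))\, \psi^\alpha(u(x)) \right)$. -/
open Finset

section Partials

variable {N : ℕ} {f : (Fin N → ℝ) → ℝ}

theorem fderiv_apply_eq_pd_dotProduct (f : (Fin N → ℝ) → ℝ) (p v : Fin N → ℝ) :
    fderiv ℝ f p v = (pd f · p) ⬝ᵥ v := by
  conv_lhs => rw [pi_eq_sum_univ' v]
  simp [dotProduct, pd, mul_comm]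

theorem DifferentiableAt.hasDerivAt_comp_pd {u : ℝ → Fin N → ℝ} {v : Fin N → ℝ} {x : ℝ}
    (hf : DifferentiableAt ℝ f (u x)) (hu : HasDerivAt u v x) :
    HasDerivAt (fun t => f (u t)) ((pd f · (u x)) ⬝ᵥ v) x :=
  fderiv_apply_eq_pd_dotProduct f (u x) v ▸ hf.hasFDerivAt.comp_hasDerivAt x hu

theorem ContDiffAt.differentiableAt_pd {p : Fin N → ℝ} (hf : ContDiffAt ℝ 2 f p) (k : Fin N) :
    DifferentiableAt ℝ (pd f k) p :=
  ((hf.fderiv_right (by norm_num)).differentiableAt one_ne_zero).clm_apply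
    (differentiableAt_const _)

end Partials

section DotProduct

variable {n : Type*} [Fintype n] {f g : ℝ → ℝ} {a b v : n → ℝ} {x : ℝ}

theorem HasDerivAt.mul_dotProduct (hf : HasDerivAt f (a ⬝ᵥ v) x) (hg : HasDerivAt g (b ⬝ᵥ v) x) :
    HasDerivAt (fun t => f t * g t) ((g x • a + f x • b) ⬝ᵥ v) x := by
  refine (hf.mul hg).congr_deriv ?_
  simp only [add_dotProduct, smul_dotProduct, smul_eq_mul]
  ring

theorem HasDerivAt.const_mul_dotProduct (c : ℝ) (hf : HasDerivAt f (a ⬝ᵥ v) x) :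
    HasDerivAt (fun t => c * f t) ((c • a) ⬝ᵥ v) x :=
  (hf.const_mul c).congr_deriv (smul_dotProduct c a v).symm

theorem HasDerivAt.sum_dotProduct {ι : Type*} (s : Finset ι) {f : ι → ℝ → ℝ} {a : ι → n → ℝ}
    (h : ∀ i ∈ s, HasDerivAt (f i) (a i ⬝ᵥ v) x) :
    HasDerivAt (fun t => ∑ i ∈ s, f i t) ((∑ i ∈ s, a i) ⬝ᵥ v) x :=
  (HasDerivAt.fun_sum h).congr_deriv (_root_.sum_dotProduct s a v).symm

end DotProduct

theorem stmt10_general (N L : ℕ) (U : Set (Fin N → ℝ)) (hU : IsOpen U)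
    (ηup ηlow : Matrix (Fin N) (Fin N) ℝ)
    (ε : Fin L → ℝ)
    (F : Fin N → (Fin N → ℝ) → ℝ) (ψ : Fin L → (Fin N → ℝ) → ℝ)
    (hF : ∀ i, ContDiffOn ℝ 2 (F i) U) (hψ : ∀ α, ContDiffOn ℝ 2 (ψ α) U)
    (u : ℝ → Fin N → ℝ) (hu : ContDiff ℝ 1 u) (hrange : ∀ x, u x ∈ U) :
    ∀ i, ∀ x : ℝ,
      (∑ k, ((∑ s, ∑ j, ηup i s * pd (F j) s (u x) * ηlow j k)
          + pd (F i) k (u x)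
          + (∑ s, ∑ j, ∑ r, ηup i s * pd (pd (F j) s) k (u x) * ηlow j r * u x r)
          - (∑ s, ηup i s * ∑ α, ε α * pd (ψ α) s (u x) * pd (ψ α) k (u x))
          - (∑ s, ηup i s * ∑ α, ε α * pd (pd (ψ α) s) k (u x) * ψ α (u x)))
        * deriv (fun t => u t k) x)
      = deriv (fun t => F i (u t)
          + (∑ s, ∑ j, ∑ r, ηup i s * ηlow j r * pd (F j) s (u t) * u t r)
          - ∑ s, ηup i s * ∑ α, ε α * pd (ψ α) s (u t) * ψ α (u t)) x := by
  intro i x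
  have hu' : HasDerivAt u (deriv u x) x := (hu.differentiable one_ne_zero x).hasDerivAt
  have hC2 {f : (Fin N → ℝ) → ℝ} (hf : ContDiffOn ℝ 2 f U) : ContDiffAt ℝ 2 f (u x) :=
    hf.contDiffAt (hU.mem_nhds (hrange x))
  have hcoord (r : Fin N) : HasDerivAt (fun t => u t r) (Pi.single r 1 ⬝ᵥ deriv u x) x := by
    simpa only [single_one_dotProduct] using hasDerivAt_pi.mp hu' r
  have hF' j := ((hC2 (hF j)).differentiableAt two_ne_zero).hasDerivAt_comp_pd hu'
  have hψ' α := ((hC2 (hψ α)).differentiableAt two_ne_zero).hasDerivAt_comp_pd hu'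
  have hpdF j s := ((hC2 (hF j)).differentiableAt_pd s).hasDerivAt_comp_pd hu'
  have hpdψ α s := ((hC2 (hψ α)).differentiableAt_pd s).hasDerivAt_comp_pd hu'
  have hflux := ((hF' i).fun_add (HasDerivAt.sum_dotProduct univ fun s _ =>
    HasDerivAt.sum_dotProduct univ fun j _ => HasDerivAt.sum_dotProduct univ fun r _ =>
      ((hpdF j s).const_mul_dotProduct (ηup i s * ηlow j r)).mul_dotProduct (hcoord r))).fun_sub
    (HasDerivAt.sum_dotProduct univ fun s _ => (HasDerivAt.sum_dotProduct univ fun α _ =>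
      ((hpdψ α s).const_mul_dotProduct (ε α)).mul_dotProduct (hψ' α)).const_mul_dotProduct
        (ηup i s))
  have hvel (k : Fin N) : deriv (fun t => u t k) x = deriv u x k :=
    (hasDerivAt_pi.mp hu' k).deriv
  rw [hflux.deriv, ← add_dotProduct, ← sub_dotProduct]
  simp only [hvel]
  refine congrArg (· ⬝ᵥ deriv u x) (funext fun k => ?_)
  -- the factor `u t r` contributes `Pi.single r 1`, which collapses the sum over `r` to `r = k`
  simp only [Pi.add_apply, Pi.sub_apply, Finset.sum_apply, Pi.smul_apply, smul_eq_mul,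
    Pi.single_apply, mul_add, sum_add_distrib, mul_ite, mul_one, mul_zero, Finset.sum_ite_eq,
    Finset.mem_univ, if_true, mul_sum]
  simp only [mul_comm, mul_left_comm]
  ring

theorem stmt10 (N L : ℕ) (U : Set (Fin N → ℝ)) (hU : IsOpen U)
    (ηup ηlow : Matrix (Fin N) (Fin N) ℝ) (hsym : ηup.IsSymm) (hsym' : ηlow.IsSymm)
    (hinv : ηup * ηlow = 1) (hinv' : ηlow * ηup = 1)
    (ε : Fin L → ℝ)
    (F : Fin N → (Fin N → ℝ) → ℝ) (ψ : Fin L → (Fin N → ℝ) → ℝ)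
    (hF : ∀ i, ContDiffOn ℝ 2 (F i) U) (hψ : ∀ α, ContDiffOn ℝ 2 (ψ α) U)
    (u : ℝ → Fin N → ℝ) (hu : ContDiff ℝ 1 u) (hrange : ∀ x, u x ∈ U) :
    ∀ i, ∀ x : ℝ,
      (∑ k, ((∑ s, ∑ j, ηup i s * pd (F j) s (u x) * ηlow j k)
          + pd (F i) k (u x)
          + (∑ s, ∑ j, ∑ r, ηup i s * pd (pd (F j) s) k (u x) * ηlow j r * u x r)
          - (∑ s, ηup i s * ∑ α, ε α * pd (ψ α) s (u x) * pd (ψ α) k (u x))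
          - (∑ s, ηup i s * ∑ α, ε α * pd (pd (ψ α) s) k (u x) * ψ α (u x)))
        * deriv (fun t => u t k) x)
      = deriv (fun t => F i (u t)
          + (∑ s, ∑ j, ∑ r, ηup i s * ηlow j r * pd (F j) s (u t) * u t r)
          - ∑ s, ηup i s * ∑ α, ε α * pd (ψ α) s (u t) * ψ α (u t)) x :=
  stmt10_general N L U hU ηup ηlow ε F ψ hF hψ u hu hrange
end
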